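/- Let a < b be real numbers, let u : ℝ → ℝ be continuously differentiable on [a,b], let δ ≥ 0, and let w : ℝ → ℝ be integrable on [a,b] with |w(s) − 1| ≤ δ for all s ∈ [a,b]. Then for every r ∈ [a,b], | u(r) − (b − a)⁻¹ ∫_a^b u(s) w(s) ds | ≤ ∫_a^b |u'(s)| ds + δ (b − a)⁻¹ ∫_a^b |u(s)| ds. -/

import Mathlib

open MeasureTheory intervalIntegral Set

/-!
Split `u r - (b-a)⁻¹ ∫ u w` as `(u r - (b-a)⁻¹ ∫ u) + (b-a)⁻¹ ∫ u (1 - w)`. By the fundamental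
theorem of calculus every difference `u r - u s` is bounded by the total variation `∫ |u'|`, hence
so is its average over `s`; the second term is at most `δ (b-a)⁻¹ ∫ |u|` because `|1 - w| ≤ δ`.
-/

section

variable {a b : ℝ} {u : ℝ → ℝ}

theorem ContDiffOn.intervalIntegrable_derivWithin_Icc (hu : ContDiffOn ℝ 1 u (Icc a b))
    (hab : a ≤ b) : IntervalIntegrable (derivWithin u (Icc a b)) volume a b := by
  rcases hab.eq_or_lt with rfl | hlt
  · exact IntervalIntegrable.refl
  exact (hu.continuousOn_derivWithin (uniqueDiffOn_Icc hlt) le_rfl).intervalIntegrable_of_Icc hab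

theorem ContDiffOn.sub_eq_integral_derivWithin_Icc (hu : ContDiffOn ℝ 1 u (Icc a b)) {x y : ℝ}
    (hx : x ∈ Icc a b) (hy : y ∈ Icc a b) (hxy : x ≤ y) :
    u y - u x = ∫ t in x..y, derivWithin u (Icc a b) t := by
  have hsub : Icc x y ⊆ Icc a b := Icc_subset_Icc hx.1 hy.2
  have hint := (hu.intervalIntegrable_derivWithin_Icc (hx.1.trans hx.2)).mono_set
    (by rwa [uIcc_of_le hxy, uIcc_of_le (hx.1.trans hx.2)])
  refine (integral_eq_sub_of_hasDerivAt_of_le hxy (hu.continuousOn.mono hsub) (fun t ht => ?_)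
    hint).symm
  have hta : t ∈ Ioo a b := ⟨hx.1.trans_lt ht.1, ht.2.trans_le hy.2⟩
  exact (hu.differentiableOn one_ne_zero t (Ioo_subset_Icc_self hta)).hasDerivWithinAt.hasDerivAt
    (Icc_mem_nhds hta.1 hta.2)

theorem ContDiffOn.abs_sub_le_integral_abs_derivWithin (hu : ContDiffOn ℝ 1 u (Icc a b))
    {x y : ℝ} (hx : x ∈ Icc a b) (hy : y ∈ Icc a b) :
    |u y - u x| ≤ ∫ t in a..b, |derivWithin u (Icc a b) t| := by
  wlog hxy : x ≤ y generalizing x y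
  · rw [abs_sub_comm]
    exact this hy hx (le_of_not_ge hxy)
  calc |u y - u x| = |∫ t in x..y, derivWithin u (Icc a b) t| := by
        rw [hu.sub_eq_integral_derivWithin_Icc hx hy hxy]
    _ ≤ ∫ t in x..y, |derivWithin u (Icc a b) t| := abs_integral_le_integral_abs hxy
    _ ≤ ∫ t in a..b, |derivWithin u (Icc a b) t| :=
        integral_mono_interval hx.1 hxy hy.2 (Filter.Eventually.of_forall fun _ => abs_nonneg _)
          (hu.intervalIntegrable_derivWithin_Icc (hx.1.trans hx.2)).abs

end

theorem abs_sub_inv_mul_integral_le {a b c M : ℝ} {f : ℝ → ℝ} (hab : a < b)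
    (hf : IntervalIntegrable f volume a b) (hM : ∀ s ∈ Icc a b, |c - f s| ≤ M) :
    |c - (b - a)⁻¹ * ∫ s in a..b, f s| ≤ M := by
  have hba : 0 < b - a := sub_pos.2 hab
  have hsplit : c - (b - a)⁻¹ * ∫ s in a..b, f s = (b - a)⁻¹ * ∫ s in a..b, (c - f s) := by
    rw [integral_sub intervalIntegrable_const hf, intervalIntegral.integral_const, smul_eq_mul]
    field_simp
  have hbound : |∫ s in a..b, (c - f s)| ≤ M * (b - a) := by
    simpa [abs_of_pos hba] using norm_integral_le_of_norm_le_const (a := a) (b := b)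
      (f := fun s => c - f s) fun s hs => hM s (Ioc_subset_Icc_self (uIoc_of_le hab.le ▸ hs))
  rw [hsplit, abs_mul, abs_inv, abs_of_pos hba]
  calc (b - a)⁻¹ * |∫ s in a..b, (c - f s)| ≤ (b - a)⁻¹ * (M * (b - a)) := by gcongr
    _ = M := by field_simp

theorem abs_integral_mul_le_mul_integral_abs {a b δ : ℝ} {f g : ℝ → ℝ} (hab : a ≤ b)
    (hf : IntervalIntegrable f volume a b) (hg : ∀ s ∈ Icc a b, |g s| ≤ δ) :
    |∫ s in a..b, f s * g s| ≤ δ * ∫ s in a..b, |f s| := by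
  rw [← intervalIntegral.integral_const_mul, ← Real.norm_eq_abs]
  refine norm_integral_le_of_norm_le hab (Filter.Eventually.of_forall fun s hs => ?_)
    (hf.abs.const_mul δ)
  rw [Real.norm_eq_abs, abs_mul, mul_comm]
  exact mul_le_mul_of_nonneg_right (hg s (Ioc_subset_Icc_self hs)) (abs_nonneg _)

theorem stmt8_general (a b : ℝ) (hab : a < b) (u w : ℝ → ℝ)
    (hu : ContDiffOn ℝ 1 u (Set.Icc a b))
    (δ : ℝ)
    (hw : MeasureTheory.IntegrableOn w (Set.Icc a b))
    (hwδ : ∀ s ∈ Set.Icc a b, |w s - 1| ≤ δ) :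
    ∀ r ∈ Set.Icc a b,
      |u r - (b - a)⁻¹ * ∫ s in a..b, u s * w s| ≤
        (∫ s in a..b, |derivWithin u (Set.Icc a b) s|) +
          δ * (b - a)⁻¹ * ∫ s in a..b, |u s| := by
  intro r hr
  have hui : IntervalIntegrable u volume a b := hu.continuousOn.intervalIntegrable_of_Icc hab.le
  have huw : IntervalIntegrable (fun s => u s * w s) volume a b :=
    (intervalIntegrable_iff_integrableOn_Icc_of_le hab.le).2
      (hw.continuousOn_mul hu.continuousOn isCompact_Icc)
  have hsplit : u r - (b - a)⁻¹ * ∫ s in a..b, u s * w s =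
      (u r - (b - a)⁻¹ * ∫ s in a..b, u s) + (b - a)⁻¹ * ∫ s in a..b, u s * (1 - w s) := by
    simp only [mul_one_sub]
    rw [integral_sub hui huw]
    ring
  have hvariation := abs_sub_inv_mul_integral_le hab hui fun s hs =>
    hu.abs_sub_le_integral_abs_derivWithin hs hr
  have hweight := abs_integral_mul_le_mul_integral_abs (g := fun s => 1 - w s) hab.le hui
    fun s hs => abs_sub_comm (w s) 1 ▸ hwδ s hs
  calc |u r - (b - a)⁻¹ * ∫ s in a..b, u s * w s|
      ≤ |u r - (b - a)⁻¹ * ∫ s in a..b, u s| + (b - a)⁻¹ * |∫ s in a..b, u s * (1 - w s)| := by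
        rw [hsplit]
        refine (abs_add_le _ _).trans_eq ?_
        rw [abs_mul, abs_of_pos (inv_pos.2 (sub_pos.2 hab))]
    _ ≤ (∫ s in a..b, |derivWithin u (Icc a b) s|) + (b - a)⁻¹ * (δ * ∫ s in a..b, |u s|) := by
        gcongr
    _ = _ := by ring

/-- Fiberwise content of Lemma 4.2 of the paper: if `u` is `C¹` on `[a,b]`, `w` is
integrable on `[a,b]` with `|w − 1| ≤ δ` there, then for every `r ∈ [a,b]`,
`|u(r) − (b−a)⁻¹ ∫_a^b u w| ≤ ∫_a^b |u'| + δ (b−a)⁻¹ ∫_a^b |u|`. -/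
theorem stmt8 (a b : ℝ) (hab : a < b) (u w : ℝ → ℝ)
    (hu : ContDiffOn ℝ 1 u (Set.Icc a b))
    (δ : ℝ) (hδ : 0 ≤ δ)
    (hw : MeasureTheory.IntegrableOn w (Set.Icc a b))
    (hwδ : ∀ s ∈ Set.Icc a b, |w s - 1| ≤ δ) :
    ∀ r ∈ Set.Icc a b,
      |u r - (b - a)⁻¹ * ∫ s in a..b, u s * w s| ≤
        (∫ s in a..b, |derivWithin u (Set.Icc a b) s|) +
          δ * (b - a)⁻¹ * ∫ s in a..b, |u s| :=
  stmt8_general a b hab u w hu δ hw hwδ
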